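/- arXiv:0710.0194 — 2 statements merged into one kernel-verified Lean document; each statement's English description precedes it below -/
import Mathlib

section
/- The algebra of invariant differential operators decomposes as D^𝔤 = ⨁_{l ∈ A^⊥ ∩ ℤ^n} M_l; that is, D^𝔤 is exactly the ℂ-linear span of the operators {e_1^{γ_1} ∘ ⋯ ∘ e_n^{γ_n} ∘ ω_l : γ ∈ ℕ^n, l ∈ A^⊥ ∩ ℤ^n}. -/
open MvPolynomial

noncomputable section

/-- The polynomial ring `P = ℂ[x_1, …, x_n]`. -/
abbrev Pn (n : ℕ) := MvPolynomial (Fin n) ℂ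

/-- Multiplication by the variable `x_j`, as a ℂ-linear endomorphism of `P`. -/
def Xop (n : ℕ) (j : Fin n) : Module.End ℂ (Pn n) :=
  LinearMap.mulLeft ℂ (X j)

/-- The partial derivative `∂_j`, as a ℂ-linear endomorphism of `P`. -/
def Dop (n : ℕ) (j : Fin n) : Module.End ℂ (Pn n) :=
  (pderiv j).toLinearMap

/-- The Weyl algebra `D`: the ℂ-subalgebra of `End_ℂ(P)` generated by the `X_j` and `∂_j`. -/
def weylD (n : ℕ) : Subalgebra ℂ (Module.End ℂ (Pn n)) :=
  Algebra.adjoin ℂ (Set.range (Xop n) ∪ Set.range (Dop n))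

/-- The Euler operator `e_j = X_j ∘ ∂_j`. -/
def eulOp (n : ℕ) (j : Fin n) : Module.End ℂ (Pn n) :=
  Xop n j * Dop n j

/-- The factor `v_j`: `X_j^{l_j}` if `l_j ≥ 0`, and `∂_j^{-l_j}` if `l_j < 0`. -/
def vOp (n : ℕ) (l : Fin n → ℤ) (j : Fin n) : Module.End ℂ (Pn n) :=
  if 0 ≤ l j then Xop n j ^ (l j).toNat else Dop n j ^ (-(l j)).toNat

/-- The operator `ω_l = v_1 ∘ ⋯ ∘ v_n` attached to a lattice point `l ∈ ℤ^n`. -/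
def omegaOp (n : ℕ) (l : Fin n → ℤ) : Module.End ℂ (Pn n) :=
  (List.ofFn (vOp n l)).prod

/-- The operator `e^γ = e_1^{γ_1} ∘ ⋯ ∘ e_n^{γ_n}` for a multi-index `γ ∈ ℕ^n`. -/
def eulPow (n : ℕ) (γ : Fin n → ℕ) : Module.End ℂ (Pn n) :=
  (List.ofFn fun j => eulOp n j ^ γ j).prod

/-- The operator `τ_c = -∑_j c_j e_j` attached to a vector `c ∈ ℂ^n`. -/
def tauC (n : ℕ) (c : Fin n → ℂ) : Module.End ℂ (Pn n) :=
  -∑ j, c j • eulOp n j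

/-- The algebra `D^𝔤` of invariant differential operators: elements of `D` commuting
with each `τ_i = -∑_j a^i_j e_j`. -/
def invD (n m : ℕ) (a : Fin m → Fin n → ℂ) : Set (Module.End ℂ (Pn n)) :=
  {ω | ω ∈ weylD n ∧ ∀ i : Fin m, tauC n (a i) * ω = ω * tauC n (a i)}

/-!
The operator `e^γ ∘ ω_l` sends `x^α` to `C_l(α) (α + l)^γ x^{α+l}`, where
`C_l(α) = ∏_j α_j (α_j - 1) ⋯ (α_j + l_j + 1)` vanishes exactly when `α + l ∉ ℕ^n`. Hence `M_l`
consists of the operators `x^α ↦ C_l(α) q(α) x^{α+l}` with `q` a polynomial, and composing on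
the left with `X_j` or `∂_j` changes only the `j`-th factor of `C_l`, by a linear factor that is
absorbed into `q`. So `X_j M_l ⊆ M_{l+e_j}` and `∂_j M_l ⊆ M_{l-e_j}`, whence `D ⊆ ∑_l M_l`.
The sum is direct since `M_l` shifts exponents by exactly `l`, and `τ_c` acts on `M_l` by the
commutator scalar `-⟨l, c⟩`; so an element of `D` commutes with every `τ_i` iff its components
outside `A^⊥` vanish.
-/

section

variable {n : ℕ}

lemma list_prod_map_apply_of_eigen {R M ι : Type*} [CommSemiring R] [AddCommMonoid M]
    [Module R M] (s : List ι) (f : ι → Module.End R M) (c : ι → R) {p : M}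
    (h : ∀ i ∈ s, f i p = c i • p) :
    (s.map f).prod p = (s.map c).prod • p := by
  induction s with
  | nil => simp
  | cons i t ih =>
    rw [List.map_cons, List.prod_cons, Module.End.mul_apply,
      ih fun k hk => h k (List.mem_cons_of_mem _ hk), map_smul, h i List.mem_cons_self,
      smul_smul, List.map_cons, List.prod_cons, mul_comm]

lemma end_ext_monomial {f g : Module.End ℂ (Pn n)}
    (h : ∀ α, f (monomial α 1) = g (monomial α 1)) : f = g :=
  (basisMonomials (Fin n) ℂ).ext fun α => by simpa [coe_basisMonomials] using h α

lemma smul_monomial_one_congr {c d : ℂ} {β β' : Fin n →₀ ℕ} (h : c = d)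
    (hβ : c ≠ 0 → β = β') : c • monomial β (1 : ℂ) = d • monomial β' 1 := by
  subst h
  by_cases hc : c = 0
  · simp [hc]
  · rw [hβ hc]

lemma Xop_pow_monomial (j : Fin n) (k : ℕ) (α : Fin n →₀ ℕ) :
    (Xop n j ^ k) (monomial α 1) = monomial (α + Finsupp.single j k) 1 := by
  rw [Xop, LinearMap.pow_mulLeft, LinearMap.mulLeft_apply, X_pow_eq_monomial, monomial_mul,
    add_comm, one_mul]

lemma Xop_monomial (j : Fin n) (α : Fin n →₀ ℕ) :
    Xop n j (monomial α 1) = monomial (α + Finsupp.single j 1) 1 := by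
  simpa using Xop_pow_monomial j 1 α

lemma Dop_monomial (j : Fin n) (α : Fin n →₀ ℕ) :
    Dop n j (monomial α 1) = (α j : ℂ) • monomial (α - Finsupp.single j 1) 1 := by
  simp [Dop, pderiv_monomial, smul_monomial]

lemma Dop_pow_monomial (j : Fin n) (k : ℕ) (α : Fin n →₀ ℕ) :
    (Dop n j ^ k) (monomial α 1)
      = ((α j).descFactorial k : ℂ) • monomial (α - Finsupp.single j k) 1 := by
  induction k with
  | zero => simp
  | succ k ih =>
    rw [pow_succ', Module.End.mul_apply, ih, map_smul, Dop_monomial, smul_smul,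
      Nat.descFactorial_succ, Nat.cast_mul, mul_comm ((α j - k : ℕ) : ℂ)]
    rw [tsub_tsub, ← Finsupp.single_add]
    simp

lemma eulOp_monomial (j : Fin n) (α : Fin n →₀ ℕ) :
    eulOp n j (monomial α 1) = (α j : ℂ) • monomial α 1 := by
  rw [eulOp, Module.End.mul_apply, Dop_monomial, map_smul, Xop_monomial]
  rcases Nat.eq_zero_or_pos (α j) with h | h
  · simp [h]
  · rw [tsub_add_cancel_of_le (Finsupp.single_le_iff.2 h)]

lemma eulPow_monomial (γ : Fin n → ℕ) (α : Fin n →₀ ℕ) :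
    eulPow n γ (monomial α 1) = (∏ j, (α j : ℂ) ^ γ j) • monomial α 1 := by
  have h (j : Fin n) (k : ℕ) : (eulOp n j ^ k) (monomial α 1) = (α j : ℂ) ^ k • monomial α 1 := by
    induction k with
    | zero => simp
    | succ k ih => rw [pow_succ', Module.End.mul_apply, ih, map_smul, eulOp_monomial, smul_smul,
        pow_succ]
  rw [eulPow, List.ofFn_eq_map, list_prod_map_apply_of_eigen _ _ _ fun j _ => h j (γ j),
    ← List.ofFn_eq_map, List.prod_ofFn]

lemma tauC_monomial (c : Fin n → ℂ) (α : Fin n →₀ ℕ) :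
    tauC n c (monomial α 1) = -(∑ j, c j * α j) • monomial α 1 := by
  simp [tauC, eulOp_monomial, Finset.sum_smul, smul_smul]

-- Truncated at `0`; it only matters where `descCoeff l α ≠ 0`, i.e. where `α + l ∈ ℕ^n`.
def expShift (l : Fin n → ℤ) (α : Fin n →₀ ℕ) : Fin n →₀ ℕ :=
  Finsupp.equivFunOnFinite.symm fun j => (α j + l j).toNat

lemma expShift_apply (l : Fin n → ℤ) (α : Fin n →₀ ℕ) (j : Fin n) :
    expShift l α j = (α j + l j).toNat := rfl

def descCoeff (l : Fin n → ℤ) (α : Fin n →₀ ℕ) : ℕ :=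
  ∏ j, (α j).descFactorial (-l j).toNat

lemma descCoeff_ne_zero_iff {l : Fin n → ℤ} {α : Fin n →₀ ℕ} :
    descCoeff l α ≠ 0 ↔ ∀ j, 0 ≤ α j + l j := by
  simp only [descCoeff, Finset.prod_ne_zero_iff, Finset.mem_univ, true_imp_iff, ne_eq,
    Nat.descFactorial_eq_zero_iff_lt, not_lt]
  exact forall_congr' fun j => by omega

lemma coe_expShift {l : Fin n → ℤ} {α : Fin n →₀ ℕ} (h : descCoeff l α ≠ 0) (j : Fin n) :
    (expShift l α j : ℤ) = α j + l j := by
  have := descCoeff_ne_zero_iff.1 h j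
  simp only [expShift_apply]
  omega

lemma cast_expShift {l : Fin n → ℤ} {α : Fin n →₀ ℕ} (h : descCoeff l α ≠ 0) (j : Fin n) :
    (expShift l α j : ℂ) = α j + l j :=
  mod_cast coe_expShift h j

lemma descFactorial_toNat_neg (a : ℕ) {k : ℤ} (hk : k < 0) :
    (a.descFactorial (-k).toNat : ℂ) = a.descFactorial (-(k + 1)).toNat * ((a : ℂ) + k + 1) := by
  obtain ⟨m, rfl⟩ : ∃ m : ℕ, k = -m - 1 := ⟨(-(k + 1)).toNat, by omega⟩
  rw [show (-(-(m : ℤ) - 1)).toNat = m + 1 by omega, show (-(-(m : ℤ) - 1 + 1)).toNat = m by omega,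
    Nat.descFactorial_succ, Nat.cast_mul, mul_comm]
  rcases lt_or_ge a m with h | h
  · simp [Nat.descFactorial_eq_zero_iff_lt.2 h]
  · push_cast [h]
    ring

lemma descCoeff_eq_mul_descCoeff_update (l : Fin n → ℤ) (j : Fin n) (α : Fin n →₀ ℕ) :
    (descCoeff l α : ℂ) = descCoeff (Function.update l j (l j + 1)) α *
      if l j < 0 then (α j : ℂ) + l j + 1 else 1 := by
  simp only [descCoeff, Nat.cast_prod]
  have hrest : ∏ i ∈ {j}ᶜ, ((α i).descFactorial (-Function.update l j (l j + 1) i).toNat : ℂ)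
      = ∏ i ∈ {j}ᶜ, ((α i).descFactorial (-l i).toNat : ℂ) :=
    Finset.prod_congr rfl fun i hi => by rw [Function.update_of_ne (by simpa using hi)]
  rw [Fintype.prod_eq_mul_prod_compl j, Fintype.prod_eq_mul_prod_compl j, hrest,
    Function.update_self]
  split_ifs with h
  · rw [descFactorial_toNat_neg _ h]
    ring
  · rw [show (-(l j + 1)).toNat = (-l j).toNat by omega, mul_one]

lemma vOp_monomial (l : Fin n → ℤ) (j : Fin n) (α : Fin n →₀ ℕ) :
    vOp n l j (monomial α 1) = ((α j).descFactorial (-l j).toNat : ℂ) •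
      monomial (expShift (Pi.single j (l j)) α) 1 := by
  rw [vOp]
  split_ifs with h
  · rw [Xop_pow_monomial, show (-l j).toNat = 0 by omega, Nat.descFactorial_zero,
      Nat.cast_one, one_smul]
    congr 2
    ext i
    rcases eq_or_ne i j with rfl | hi <;> simp [expShift_apply, *]
    omega
  · rw [Dop_pow_monomial]
    congr 3
    ext i
    rcases eq_or_ne i j with rfl | hi <;> simp [expShift_apply, *]
    omega

lemma prod_map_vOp_monomial (l : Fin n → ℤ) {s : List (Fin n)} (hs : s.Nodup)
    (α : Fin n →₀ ℕ) :
    (s.map (vOp n l)).prod (monomial α 1)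
      = (s.map fun j => ((α j).descFactorial (-l j).toNat : ℂ)).prod •
        monomial (expShift (fun j => if j ∈ s then l j else 0) α) 1 := by
  induction s with
  | nil =>
    simp only [List.map_nil, List.prod_nil, Module.End.one_apply, List.not_mem_nil,
      if_false, one_smul]
    congr 2
    ext i
    simp [expShift_apply]
  | cons j t ih =>
    obtain ⟨hj, ht⟩ := List.nodup_cons.1 hs
    rw [List.map_cons, List.prod_cons, Module.End.mul_apply, ih ht, map_smul, vOp_monomial,
      smul_smul, List.map_cons, List.prod_cons, mul_comm]
    congr 3
    · simp [expShift_apply, hj]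
    · ext i
      rcases eq_or_ne i j with rfl | hi <;> simp [expShift_apply, *]
      omega

lemma omegaOp_monomial (l : Fin n → ℤ) (α : Fin n →₀ ℕ) :
    omegaOp n l (monomial α 1) = (descCoeff l α : ℂ) • monomial (expShift l α) 1 := by
  rw [omegaOp, List.ofFn_eq_map, prod_map_vOp_monomial l (List.nodup_finRange n),
    ← List.ofFn_eq_map, List.prod_ofFn, descCoeff, Nat.cast_prod]
  simp only [List.mem_finRange, if_true]

def shiftOp (l : Fin n → ℤ) : MvPolynomial (Fin n) ℂ →ₗ[ℂ] Module.End ℂ (Pn n) where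
  toFun q := (basisMonomials (Fin n) ℂ).constr ℂ fun α =>
    (descCoeff l α * eval (fun j => (α j : ℂ)) q) • monomial (expShift l α) (1 : ℂ)
  map_add' p q := by
    rw [← map_add]
    congr 1
    ext1 α
    simp [mul_add, add_smul]
  map_smul' c q := by
    rw [RingHom.id_apply, ← map_smul]
    congr 1
    ext1 α
    simp [smul_smul, mul_left_comm]

lemma shiftOp_monomial (l : Fin n → ℤ) (q : MvPolynomial (Fin n) ℂ) (α : Fin n →₀ ℕ) :
    shiftOp l q (monomial α 1)
      = (descCoeff l α * eval (fun j => (α j : ℂ)) q) • monomial (expShift l α) 1 := by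
  have h := (basisMonomials (Fin n) ℂ).constr_basis ℂ
    (fun α => (descCoeff l α * eval (fun j => (α j : ℂ)) q) • monomial (expShift l α) (1 : ℂ)) α
  rw [coe_basisMonomials] at h
  exact h

lemma eulPow_mul_omegaOp (γ : Fin n → ℕ) (l : Fin n → ℤ) :
    eulPow n γ * omegaOp n l = shiftOp l (∏ j, (X j + C (l j : ℂ)) ^ γ j) := by
  refine end_ext_monomial fun α => ?_
  rw [Module.End.mul_apply, omegaOp_monomial, map_smul, eulPow_monomial, smul_smul,
    shiftOp_monomial]
  refine smul_monomial_one_congr ?_ fun _ => rfl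
  by_cases h : descCoeff l α = 0
  · simp [h]
  · simp [cast_expShift h]

lemma Xop_mul_shiftOp (l : Fin n → ℤ) (j : Fin n) (q : MvPolynomial (Fin n) ℂ) :
    Xop n j * shiftOp l q = shiftOp (Function.update l j (l j + 1))
      (if l j < 0 then (X j + C ((l j : ℂ) + 1)) * q else q) := by
  refine end_ext_monomial fun α => ?_
  rw [Module.End.mul_apply, shiftOp_monomial, map_smul, Xop_monomial, shiftOp_monomial]
  refine smul_monomial_one_congr ?_ fun h => ?_
  · rw [descCoeff_eq_mul_descCoeff_update l j α]
    split_ifs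
    · simp only [eval_mul, eval_add, eval_X, eval_C]
      ring
    · ring
  · have hα := descCoeff_ne_zero_iff.1 (by exact_mod_cast left_ne_zero_of_mul h)
    ext i
    have := hα i
    rcases eq_or_ne i j with rfl | hi <;> simp [expShift_apply, *]
    omega

lemma Dop_mul_shiftOp (l : Fin n → ℤ) (j : Fin n) (q : MvPolynomial (Fin n) ℂ) :
    Dop n j * shiftOp l q = shiftOp (Function.update l j (l j - 1))
      (if 0 < l j then (X j + C (l j : ℂ)) * q else q) := by
  refine end_ext_monomial fun α => ?_
  rw [Module.End.mul_apply, shiftOp_monomial, map_smul, Dop_monomial, smul_smul,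
    shiftOp_monomial]
  have hcoeff := descCoeff_eq_mul_descCoeff_update (Function.update l j (l j - 1)) j α
  rw [Function.update_self, Function.update_idem, sub_add_cancel, Function.update_eq_self]
    at hcoeff
  refine smul_monomial_one_congr ?_ fun h => ?_
  · by_cases h0 : descCoeff l α = 0
    · simp [hcoeff, h0]
    · rw [cast_expShift h0, hcoeff]
      split_ifs
      · omega
      · push_cast
        ring
      · simp only [eval_mul, eval_add, eval_X, eval_C]
        ring
      · omega
  · have h0 : descCoeff l α ≠ 0 := by exact_mod_cast left_ne_zero_of_mul (left_ne_zero_of_mul h)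
    have hβj := right_ne_zero_of_mul h
    rw [cast_expShift h0] at hβj
    have hα := descCoeff_ne_zero_iff.1 h0
    have hj : (α j : ℤ) + l j ≠ 0 := fun h => hβj (by exact_mod_cast h)
    ext i
    have := hα i
    rcases eq_or_ne i j with rfl | hi <;> simp [expShift_apply, *]
    omega

lemma span_range_prod_X_add_C_pow (c : Fin n → ℂ) :
    Submodule.span ℂ (Set.range fun γ : Fin n → ℕ => ∏ j, (X j + C (c j)) ^ γ j) = ⊤ := by
  set φ : MvPolynomial (Fin n) ℂ →ₐ[ℂ] MvPolynomial (Fin n) ℂ := aeval fun j => X j + C (c j)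
  have hφ : Function.Surjective φ := fun p =>
    ⟨aeval (fun j => X j - C (c j)) p, by
      rw [← AlgHom.comp_apply, show φ.comp (aeval fun j => X j - C (c j)) = AlgHom.id ℂ _ from
        algHom_ext fun j => by simp [φ], AlgHom.id_apply]⟩
  have hrange : (Set.range fun γ : Fin n → ℕ => ∏ j, (X j + C (c j)) ^ γ j)
      = φ '' Set.range fun γ : Fin n →₀ ℕ => monomial γ (1 : ℂ) := by
    rw [← Set.range_comp, ← Finsupp.equivFunOnFinite.symm.surjective.range_comp]
    congr 1
    ext1 γ
    rw [Function.comp_apply, Function.comp_apply, aeval_monomial, map_one, one_mul,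
      Finsupp.prod_fintype _ _ fun _ => pow_zero _]
    rfl
  rw [hrange, show ⇑φ = ⇑φ.toLinearMap from rfl, Submodule.span_image,
    ← coe_basisMonomials, (basisMonomials (Fin n) ℂ).span_eq, Submodule.map_top,
    LinearMap.range_eq_top]
  exact hφ

def mSpace (l : Fin n → ℤ) : Submodule ℂ (Module.End ℂ (Pn n)) :=
  Submodule.span ℂ (Set.range fun γ => eulPow n γ * omegaOp n l)

lemma mSpace_eq_range_shiftOp (l : Fin n → ℤ) : mSpace l = LinearMap.range (shiftOp l) := by
  rw [LinearMap.range_eq_map, ← span_range_prod_X_add_C_pow (fun j => (l j : ℂ)),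
    Submodule.map_span, ← Set.range_comp]
  simp only [mSpace, eulPow_mul_omegaOp]
  rfl

lemma eulPow_mul_omegaOp_mem_weylD (γ : Fin n → ℕ) (l : Fin n → ℤ) :
    eulPow n γ * omegaOp n l ∈ weylD n := by
  have hX (j : Fin n) : Xop n j ∈ weylD n := Algebra.subset_adjoin (Or.inl ⟨j, rfl⟩)
  have hD (j : Fin n) : Dop n j ∈ weylD n := Algebra.subset_adjoin (Or.inr ⟨j, rfl⟩)
  refine mul_mem (Subalgebra.list_prod_mem _ fun x hx => ?_)
    (Subalgebra.list_prod_mem _ fun x hx => ?_) <;>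
    obtain ⟨j, rfl⟩ := (List.mem_ofFn' _ _).1 hx
  · exact pow_mem (mul_mem (hX j) (hD j)) _
  · rw [vOp]
    split_ifs
    · exact pow_mem (hX j) _
    · exact pow_mem (hD j) _

lemma one_mem_mSpace_zero : (1 : Module.End ℂ (Pn n)) ∈ mSpace 0 :=
  Submodule.subset_span ⟨0, by
    simp [eulPow, omegaOp, show vOp n 0 = fun _ => 1 from funext fun j => by simp [vOp]]⟩

lemma mul_mem_iSup_mSpace {S : Module.End ℂ (Pn n)}
    (hS : ∀ l, ∃ l', ∀ T ∈ mSpace l, S * T ∈ mSpace l') {T : Module.End ℂ (Pn n)}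
    (hT : T ∈ ⨆ l, mSpace l) : S * T ∈ ⨆ l, mSpace l := by
  refine Submodule.iSup_induction _ (motive := fun T => S * T ∈ ⨆ l, mSpace l) hT
    (fun l T hT => ?_) (by simp) fun T T' hT hT' => ?_
  · obtain ⟨l', hl'⟩ := hS l
    exact Submodule.mem_iSup_of_mem l' (hl' T hT)
  · rw [mul_add]
    exact add_mem hT hT'

lemma Xop_mul_mem_mSpace (j : Fin n) (l : Fin n → ℤ) {T : Module.End ℂ (Pn n)}
    (hT : T ∈ mSpace l) : Xop n j * T ∈ mSpace (Function.update l j (l j + 1)) := by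
  rw [mSpace_eq_range_shiftOp] at hT ⊢
  obtain ⟨q, rfl⟩ := hT
  exact ⟨_, (Xop_mul_shiftOp l j q).symm⟩

lemma Dop_mul_mem_mSpace (j : Fin n) (l : Fin n → ℤ) {T : Module.End ℂ (Pn n)}
    (hT : T ∈ mSpace l) : Dop n j * T ∈ mSpace (Function.update l j (l j - 1)) := by
  rw [mSpace_eq_range_shiftOp] at hT ⊢
  obtain ⟨q, rfl⟩ := hT
  exact ⟨_, (Dop_mul_shiftOp l j q).symm⟩

lemma weylD_le_iSup_mSpace {ω : Module.End ℂ (Pn n)} (hω : ω ∈ weylD n) :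
    ω ∈ ⨆ l, mSpace l := by
  suffices ∀ T ∈ ⨆ l, mSpace l, ω * T ∈ ⨆ l, mSpace l by
    simpa using this 1 (Submodule.mem_iSup_of_mem 0 one_mem_mSpace_zero)
  induction hω using Algebra.adjoin_induction with
  | mem S hS =>
    rcases hS with ⟨j, rfl⟩ | ⟨j, rfl⟩
    · exact fun _ => mul_mem_iSup_mSpace fun l => ⟨_, fun _ => Xop_mul_mem_mSpace j l⟩
    · exact fun _ => mul_mem_iSup_mSpace fun l => ⟨_, fun _ => Dop_mul_mem_mSpace j l⟩
  | algebraMap r =>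
    intro T hT
    rw [Algebra.algebraMap_eq_smul_one, smul_mul_assoc, one_mul]
    exact Submodule.smul_mem _ r hT
  | add S S' _ _ hS hS' => exact fun T hT => by rw [add_mul]; exact add_mem (hS T hT) (hS' T hT)
  | mul S S' _ _ hS hS' => exact fun T hT => by rw [mul_assoc]; exact hS _ (hS' T hT)

lemma coeff_eq_zero_of_mem_mSpace {l : Fin n → ℤ} {T : Module.End ℂ (Pn n)} (hT : T ∈ mSpace l)
    {α β : Fin n →₀ ℕ} (hβ : ∃ j, (β j : ℤ) ≠ α j + l j) : coeff β (T (monomial α 1)) = 0 := by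
  rw [mSpace_eq_range_shiftOp] at hT
  obtain ⟨q, rfl⟩ := hT
  rw [shiftOp_monomial, coeff_smul, coeff_monomial]
  by_cases h0 : descCoeff l α = 0
  · simp [h0]
  · obtain ⟨j, hj⟩ := hβ
    rw [if_neg fun (h : expShift l α = β) => hj (h ▸ coe_expShift h0 j), smul_zero]

lemma iSupIndep_mSpace : iSupIndep (mSpace (n := n)) := by
  refine (iSupIndep_iff_finsetSum_eq_zero_imp_eq_zero _).2 fun s T hT hsum l₀ hl₀ => ?_
  refine end_ext_monomial fun α => MvPolynomial.ext _ _ fun β => ?_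
  by_cases hβ : ∃ j, (β j : ℤ) ≠ α j + l₀ j
  · simp [coeff_eq_zero_of_mem_mSpace (hT l₀ hl₀) hβ]
  push Not at hβ
  have hcoeff : ∑ l ∈ s, coeff β (T l (monomial α 1)) = 0 := by
    simpa [coeff_sum] using congr(coeff β ($hsum (monomial α 1)))
  rwa [Finset.sum_eq_single_of_mem l₀ hl₀ fun l hl hne => coeff_eq_zero_of_mem_mSpace (hT l hl)
    ?_] at hcoeff
  by_contra! h
  exact hne (funext fun j => by have := h j; have := hβ j; omega)

lemma commutator_tauC_of_mem_mSpace (c : Fin n → ℂ) {l : Fin n → ℤ} {T : Module.End ℂ (Pn n)}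
    (hT : T ∈ mSpace l) : tauC n c * T - T * tauC n c = -(∑ j, (l j : ℂ) * c j) • T := by
  rw [mSpace_eq_range_shiftOp] at hT
  obtain ⟨q, rfl⟩ := hT
  refine end_ext_monomial fun α => ?_
  rw [LinearMap.sub_apply, Module.End.mul_apply, Module.End.mul_apply, shiftOp_monomial,
    tauC_monomial, map_smul, map_smul, tauC_monomial, shiftOp_monomial, smul_smul, smul_smul,
    LinearMap.smul_apply, shiftOp_monomial, smul_smul, ← sub_smul]
  by_cases h0 : descCoeff l α = 0
  · simp [h0]
  · simp only [cast_expShift h0, mul_add, Finset.sum_add_distrib]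
    simp only [mul_comm (l _ : ℂ) (c _)]
    congr 1
    ring

lemma dot_eq_zero_of_commute_tauC {s : Finset (Fin n → ℤ)} {T : (Fin n → ℤ) → Module.End ℂ (Pn n)}
    (hT : ∀ l ∈ s, T l ∈ mSpace l) {c : Fin n → ℂ}
    (hc : tauC n c * ∑ l ∈ s, T l = (∑ l ∈ s, T l) * tauC n c)
    {l : Fin n → ℤ} (hl : l ∈ s) (hTl : T l ≠ 0) : ∑ j, (l j : ℂ) * c j = 0 := by
  have hsum : ∑ l ∈ s, (-∑ j, (l j : ℂ) * c j) • T l = 0 := by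
    rw [← sub_eq_zero.2 hc, Finset.mul_sum, Finset.sum_mul, ← Finset.sum_sub_distrib]
    exact (Finset.sum_congr rfl fun l hl => commutator_tauC_of_mem_mSpace c (hT l hl)).symm
  have := (iSupIndep_iff_finsetSum_eq_zero_imp_eq_zero _).1 iSupIndep_mSpace s _
    (fun l hl => Submodule.smul_mem _ _ (hT l hl)) hsum l hl
  simpa [hTl] using this

lemma forall_mem_span_range_iff {m : ℕ} (a : Fin m → Fin n → ℂ) (l : Fin n → ℤ) :
    (∀ v ∈ Submodule.span ℂ (Set.range a), ∑ j, (l j : ℂ) * v j = 0)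
      ↔ ∀ i, ∑ j, (l j : ℂ) * a i j = 0 := by
  refine ⟨fun h i => h _ (Submodule.subset_span ⟨i, rfl⟩), fun h v hv => ?_⟩
  induction hv using Submodule.span_induction with
  | mem v hv => obtain ⟨i, rfl⟩ := hv; exact h i
  | zero => simp
  | add v w _ _ hv hw => simp [mul_add, Finset.sum_add_distrib, hv, hw]
  | smul r v _ hv => simp [mul_left_comm _ r, ← Finset.mul_sum, hv]

lemma invD_eq_inf_centralizer (m : ℕ) (a : Fin m → Fin n → ℂ) :
    invD n m a = (weylD n ⊓ Subalgebra.centralizer ℂ (Set.range fun i => tauC n (a i)) :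
      Subalgebra ℂ (Module.End ℂ (Pn n))) := by
  ext ω
  simp [invD, Set.mem_centralizer_iff]

end

theorem stmt3_general (n m : ℕ) (a : Fin m → Fin n → ℂ) :
    invD n m a = ↑(Submodule.span ℂ
      {x : Module.End ℂ (Pn n) | ∃ (γ : Fin n → ℕ) (l : Fin n → ℤ),
        (∀ v ∈ Submodule.span ℂ (Set.range a), ∑ j, (l j : ℂ) * v j = 0) ∧
        x = eulPow n γ * omegaOp n l}) := by
  apply subset_antisymm
  · rintro ω ⟨hωD, hω⟩
    obtain ⟨f, hf, rfl⟩ := (Submodule.mem_iSup_iff_exists_finsupp _ _).1 (weylD_le_iSup_mSpace hωD)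
    refine Submodule.sum_mem _ fun l hl => ?_
    have hperp : ∀ v ∈ Submodule.span ℂ (Set.range a), ∑ j, (l j : ℂ) * v j = 0 :=
      (forall_mem_span_range_iff a l).2 fun i =>
        dot_eq_zero_of_commute_tauC (fun l _ => hf l) (hω i) hl (Finsupp.mem_support_iff.1 hl)
    refine Submodule.span_mono ?_ (hf l)
    rintro _ ⟨γ, rfl⟩
    exact ⟨γ, l, hperp, rfl⟩
  · rw [invD_eq_inf_centralizer]
    refine SetLike.coe_subset_coe.2 <| Submodule.span_le
      (p := Subalgebra.toSubmodule (weylD n ⊓ Subalgebra.centralizer ℂ _)) |>.2 ?_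
    rintro _ ⟨γ, l, hl, rfl⟩
    refine ⟨eulPow_mul_omegaOp_mem_weylD γ l, ?_⟩
    rintro _ ⟨i, rfl⟩
    have := commutator_tauC_of_mem_mSpace (a i) (Submodule.subset_span ⟨γ, rfl⟩ : _ ∈ mSpace l)
    rwa [(forall_mem_span_range_iff a l).1 hl i, neg_zero, zero_smul, sub_eq_zero] at this

/-- `D^𝔤 = ⨁_{l ∈ A^⊥ ∩ ℤ^n} M_l`, i.e. `D^𝔤` is exactly the ℂ-linear span
of the operators `e^γ ∘ ω_l` with `γ ∈ ℕ^n` and `l ∈ A^⊥ ∩ ℤ^n`. -/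
theorem stmt3 (n m : ℕ) (hn : 1 ≤ n) (a : Fin m → Fin n → ℂ) :
    invD n m a = ↑(Submodule.span ℂ
      {x : Module.End ℂ (Pn n) | ∃ (γ : Fin n → ℕ) (l : Fin n → ℤ),
        (∀ v ∈ Submodule.span ℂ (Set.range a), ∑ j, (l j : ℂ) * v j = 0) ∧
        x = eulPow n γ * omegaOp n l}) :=
  stmt3_general n m a

end
end

section
/- Sym^𝔤 is simple as a *-algebra: if I ⊆ Sym^𝔤 is a nonzero ℂ-subspace such that [f, ω]_k ∈ I and [ω, f]_k ∈ I for all f ∈ Sym^𝔤, all ω ∈ I, and all k ≥ 0, then 1 ∈ I, and hence I = Sym^𝔤. -/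
open MvPolynomial TensorProduct

noncomputable section

/-- The polynomial ring `Q = ℂ[x_1,…,x_n,y_1,…,y_n]`; the variable `x_j` is
`X (Sum.inl j)` and `y_j` is `X (Sum.inr j)`. -/
abbrev Qn (n : ℕ) := MvPolynomial (Fin n ⊕ Fin n) ℂ

/-- The operator `Γ = ∑_i (∂/∂x_i ⊗ ∂/∂y_i − ∂/∂y_i ⊗ ∂/∂x_i)` on `Q ⊗_ℂ Q`. -/
def Gam (n : ℕ) : Module.End ℂ (Qn n ⊗[ℂ] Qn n) :=
  ∑ i : Fin n,
    (TensorProduct.map (pderiv (Sum.inl i)).toLinearMap (pderiv (Sum.inr i)).toLinearMap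
      - TensorProduct.map (pderiv (Sum.inr i)).toLinearMap (pderiv (Sum.inl i)).toLinearMap)

/-- The `k`-th transvectant `[f,g]_k = m(Γ^k(f ⊗ g))`, where `m` is multiplication. -/
def transv (n k : ℕ) (f g : Qn n) : Qn n :=
  LinearMap.mul' ℂ (Qn n) ((Gam n ^ k) (f ⊗ₜ[ℂ] g))

/-- The orthogonal complement `A^⊥ = {u ∈ ℂ^n : ∑_j u_j a_j = 0 for all a ∈ A}`. -/
def perpC (n : ℕ) (A : Submodule ℂ (Fin n → ℂ)) : Set (Fin n → ℂ) :=
  {u | ∀ v ∈ A, ∑ j, u j * v j = 0}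

/-- `Sym^𝔤`: the ℂ-linear span of the monomials `x^b y^a` with `a - b ∈ A^⊥`. -/
def SymG (n : ℕ) (A : Submodule ℂ (Fin n → ℂ)) : Submodule ℂ (Qn n) :=
  Submodule.span ℂ {q : Qn n | ∃ a b : Fin n → ℕ,
    (fun j => ((a j : ℂ) - (b j : ℂ))) ∈ perpC n A ∧
    q = (∏ j : Fin n, (X (Sum.inl j) : Qn n) ^ b j) *
        ∏ j : Fin n, (X (Sum.inr j) : Qn n) ^ a j}

/-!
The elements `x_j y_j` lie in `Sym^𝔤`, and transvecting with them gives `y_j ∂_{y_j} - x_j ∂_{x_j}`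
(order 1) and `-2 ∂_{x_j} ∂_{y_j}` (order 2); together with multiplication (order 0) and the
commutator `[∂_{x_j} ∂_{y_j}, x_j y_j] = 1 + x_j ∂_{x_j} + y_j ∂_{y_j}`, this makes `I` stable under
every Euler operator `x_v ∂_v`. These act diagonally on monomials with integer eigenvalues, so `I`
contains every monomial occurring in one of its elements. If `x^b y^a ∈ I`, then `x^a y^b ∈ Sym^𝔤`,
and their product `∏ (x_j y_j)^(a_j + b_j)` is brought down to a nonzero constant by the operators
`∂_{x_j} ∂_{y_j}`.
-/

namespace MvPolynomial

section CommSemiring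

variable {σ R : Type*} [CommSemiring R]

theorem pderiv_pderiv_comm (i j : σ) (p : MvPolynomial σ R) :
    pderiv i (pderiv j p) = pderiv j (pderiv i p) := by
  classical
  by_cases hij : i = j
  · rw [hij]
  ext m
  simp only [coeff_pderiv, Finsupp.add_apply, Finsupp.single_apply, if_neg hij,
    if_neg (Ne.symm hij), add_zero, add_right_comm m]
  ring

theorem coeff_X_mul_pderiv (v : σ) (p : MvPolynomial σ R) (s : σ →₀ ℕ) :
    coeff s (X v * pderiv v p) = s v * coeff s p := by
  classical
  induction p using MvPolynomial.induction_on' with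
  | monomial t r =>
    rw [X_mul_pderiv_monomial, coeff_smul, coeff_monomial]
    split_ifs with h
    · rw [h, nsmul_eq_mul]
    · rw [smul_zero, mul_zero]
  | add p q hp hq => rw [map_add, mul_add, coeff_add, coeff_add, hp, hq, mul_add]

theorem pderiv_pderiv_X_mul_X_mul {i j : σ} (hij : i ≠ j) (p : MvPolynomial σ R) :
    pderiv i (pderiv j (X i * X j * p)) = p + X i * pderiv i p + X j * pderiv j p
      + X i * X j * pderiv i (pderiv j p) := by
  simp only [pderiv_mul, pderiv_X_self, pderiv_X_of_ne hij, pderiv_X_of_ne (Ne.symm hij), map_add,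
    map_zero, pderiv_one]
  ring

theorem monomial_one_eq_prod_X_inl_mul_prod_X_inr {ι : Type*} [Fintype ι] (d : ι ⊕ ι →₀ ℕ) :
    monomial d (1 : R)
      = (∏ j, X (Sum.inl j) ^ d (Sum.inl j)) * ∏ j, X (Sum.inr j) ^ d (Sum.inr j) := by
  rw [monomial_eq, C_1, one_mul, Finsupp.prod_fintype _ _ fun _ => pow_zero _,
    Fintype.prod_sum_type]

end CommSemiring

section Field

variable {σ K : Type*} [Field K]

theorem monomial_one_mem_iff {I : Submodule K (MvPolynomial σ K)} {d : σ →₀ ℕ} {r : K}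
    (hr : r ≠ 0) : monomial d r ∈ I ↔ monomial d 1 ∈ I := by
  rw [← mul_one r, ← smul_eq_mul, ← smul_monomial, I.smul_mem_iff hr]

variable [CharZero K]

theorem support_X_mul_pderiv_sub_smul [DecidableEq σ] (v : σ) (c : ℕ) (p : MvPolynomial σ K) :
    (X v * pderiv v p - (c : K) • p).support = p.support.filter (fun s => s v ≠ c) := by
  ext s
  simp [coeff_X_mul_pderiv, ← sub_mul, sub_eq_zero, and_comm]

theorem monomial_one_mem_of_mem_support {I : Submodule K (MvPolynomial σ K)}
    (hI : ∀ v, ∀ p ∈ I, X v * pderiv v p ∈ I) {p : MvPolynomial σ K} (hp : p ∈ I)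
    {d : σ →₀ ℕ} (hd : d ∈ p.support) : monomial d 1 ∈ I := by
  classical
  induction hN : p.support.card using Nat.strong_induction_on generalizing p with
  | _ N ih =>
  by_cases hsingle : p.support = {d}
  · rw [p.as_sum, hsingle, Finset.sum_singleton] at hp
    exact (monomial_one_mem_iff (mem_support_iff.mp hd)).mp hp
  obtain ⟨d', hd', hd'd⟩ : ∃ d' ∈ p.support, d' ≠ d := by
    by_contra! h
    exact hsingle (Finset.eq_singleton_iff_unique_mem.mpr ⟨hd, h⟩)
  obtain ⟨v, hv⟩ : ∃ v, d' v ≠ d v := not_forall.mp (mt Finsupp.ext hd'd)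
  -- `x_v ∂_v - d' v` kills the term of exponent `d'` but not the one of exponent `d`.
  set q := X v * pderiv v p - (d' v : K) • p
  have hsupp : q.support = p.support.filter (fun s => s v ≠ d' v) :=
    support_X_mul_pderiv_sub_smul v (d' v) p
  have hlt : q.support.card < N := by
    rw [hsupp, ← hN]
    exact Finset.card_lt_card (Finset.filter_ssubset.mpr ⟨d', hd', by simp⟩)
  have hdq : d ∈ q.support := by
    rw [hsupp, Finset.mem_filter]
    exact ⟨hd, hv.symm⟩
  exact ih _ hlt (sub_mem (hI v p hp) (I.smul_mem _ hp)) hdq rfl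

theorem one_mem_of_balanced_monomial_mem {ι : Type*}
    {I : Submodule K (MvPolynomial (ι ⊕ ι) K)}
    (hI : ∀ j, ∀ p ∈ I, pderiv (Sum.inl j) (pderiv (Sum.inr j) p) ∈ I)
    {d : ι ⊕ ι →₀ ℕ} (hd : ∀ j, d (Sum.inl j) = d (Sum.inr j)) (hdI : monomial d 1 ∈ I) :
    1 ∈ I := by
  classical
  induction d using WellFoundedLT.induction with
  | _ d ih =>
  obtain rfl | hd0 := eq_or_ne d 0
  · rwa [← C_1, C_apply]
  obtain ⟨v, hv⟩ := Finsupp.ne_iff.mp hd0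
  obtain ⟨j, hjl, hjr⟩ : ∃ j, d (Sum.inl j) ≠ 0 ∧ d (Sum.inr j) ≠ 0 := by
    cases v with
    | inl j => exact ⟨j, hv, hd j ▸ hv⟩
    | inr j => exact ⟨j, (hd j).symm ▸ hv, hv⟩
  have hmem := hI j _ hdI
  rw [pderiv_monomial, pderiv_monomial, monomial_one_mem_iff (by simp [hjl, hjr])] at hmem
  refine ih _ ?_ ?_ hmem
  · refine lt_of_le_of_ne (tsub_le_self.trans tsub_le_self) fun h => ?_
    have := DFunLike.congr_fun h (Sum.inl j)
    simp at this
    omega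
  · intro i
    simp [Finsupp.single_apply, hd i]

end Field

end MvPolynomial

section Transvectant

variable {n : ℕ}

theorem Gam_tmul (f g : Qn n) :
    Gam n (f ⊗ₜ[ℂ] g) = ∑ i : Fin n,
      (pderiv (Sum.inl i) f ⊗ₜ[ℂ] pderiv (Sum.inr i) g
        - pderiv (Sum.inr i) f ⊗ₜ[ℂ] pderiv (Sum.inl i) g) := by
  simp [Gam, LinearMap.sum_apply]

theorem Gam_tmul_of_pderiv_eq_zero {f : Qn n} (j : Fin n)
    (hf : ∀ i ≠ j, pderiv (Sum.inl i) f = 0 ∧ pderiv (Sum.inr i) f = 0) (g : Qn n) :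
    Gam n (f ⊗ₜ[ℂ] g) = pderiv (Sum.inl j) f ⊗ₜ[ℂ] pderiv (Sum.inr j) g
      - pderiv (Sum.inr j) f ⊗ₜ[ℂ] pderiv (Sum.inl j) g := by
  rw [Gam_tmul, Finset.sum_eq_single j (fun i _ hi => by simp [hf i hi]) (by simp)]

theorem transv_zero (f g : Qn n) : transv n 0 f g = f * g := by
  simp [transv]

theorem Gam_X_inl_mul_X_inr_tmul (j : Fin n) (p : Qn n) :
    Gam n ((X (Sum.inl j) * X (Sum.inr j)) ⊗ₜ[ℂ] p)
      = X (Sum.inr j) ⊗ₜ[ℂ] pderiv (Sum.inr j) p - X (Sum.inl j) ⊗ₜ[ℂ] pderiv (Sum.inl j) p := by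
  rw [Gam_tmul_of_pderiv_eq_zero j (fun i hi => by simp [Ne.symm hi])]
  simp

theorem Gam_X_inl_tmul (j : Fin n) (p : Qn n) :
    Gam n (X (Sum.inl j) ⊗ₜ[ℂ] p) = 1 ⊗ₜ[ℂ] pderiv (Sum.inr j) p := by
  rw [Gam_tmul_of_pderiv_eq_zero j (fun i hi => by simp [Ne.symm hi])]
  simp

theorem Gam_X_inr_tmul (j : Fin n) (p : Qn n) :
    Gam n (X (Sum.inr j) ⊗ₜ[ℂ] p) = -(1 ⊗ₜ[ℂ] pderiv (Sum.inl j) p) := by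
  rw [Gam_tmul_of_pderiv_eq_zero j (fun i hi => by simp [Ne.symm hi])]
  simp

theorem transv_one_X_inl_mul_X_inr (j : Fin n) (p : Qn n) :
    transv n 1 (X (Sum.inl j) * X (Sum.inr j)) p
      = X (Sum.inr j) * pderiv (Sum.inr j) p - X (Sum.inl j) * pderiv (Sum.inl j) p := by
  rw [transv, pow_one, Gam_X_inl_mul_X_inr_tmul, map_sub, LinearMap.mul'_apply,
    LinearMap.mul'_apply]

theorem transv_two_X_inl_mul_X_inr (j : Fin n) (p : Qn n) :
    transv n 2 (X (Sum.inl j) * X (Sum.inr j)) p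
      = (-2 : ℂ) • pderiv (Sum.inl j) (pderiv (Sum.inr j) p) := by
  rw [transv, pow_two, Module.End.mul_apply, Gam_X_inl_mul_X_inr_tmul, map_sub, Gam_X_inl_tmul,
    Gam_X_inr_tmul, pderiv_pderiv_comm (Sum.inr j)]
  simp only [map_sub, map_neg, LinearMap.mul'_apply, one_mul]
  module

end Transvectant

section StableSubmodule

variable {n : ℕ} {I : Submodule ℂ (Qn n)}

theorem pderiv_inl_pderiv_inr_mem
    (hxy : ∀ j k, ∀ p ∈ I, transv n k (X (Sum.inl j) * X (Sum.inr j)) p ∈ I)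
    (j : Fin n) {p : Qn n} (hp : p ∈ I) : pderiv (Sum.inl j) (pderiv (Sum.inr j) p) ∈ I := by
  have h := hxy j 2 p hp
  rwa [transv_two_X_inl_mul_X_inr, I.smul_mem_iff (by norm_num)] at h

theorem X_mul_pderiv_mem
    (hxy : ∀ j k, ∀ p ∈ I, transv n k (X (Sum.inl j) * X (Sum.inr j)) p ∈ I)
    (v : Fin n ⊕ Fin n) {p : Qn n} (hp : p ∈ I) : X v * pderiv v p ∈ I := by
  have hmul : ∀ j, ∀ q ∈ I, X (Sum.inl j) * X (Sum.inr j) * q ∈ I := fun j q hq =>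
    transv_zero (n := n) _ q ▸ hxy j 0 q hq
  have hdiff : ∀ j, X (Sum.inr j) * pderiv (Sum.inr j) p
      - X (Sum.inl j) * pderiv (Sum.inl j) p ∈ I := fun j =>
    transv_one_X_inl_mul_X_inr j p ▸ hxy j 1 p hp
  have hsum : ∀ j, X (Sum.inl j) * pderiv (Sum.inl j) p
      + X (Sum.inr j) * pderiv (Sum.inr j) p ∈ I := by
    intro j
    have h := pderiv_inl_pderiv_inr_mem hxy j (hmul j p hp)
    rw [pderiv_pderiv_X_mul_X_mul Sum.inl_ne_inr] at h
    convert sub_mem (sub_mem h hp) (hmul j _ (pderiv_inl_pderiv_inr_mem hxy j hp)) using 1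
    ring
  rw [← I.smul_mem_iff (two_ne_zero (α := ℂ))]
  cases v with
  | inl j => convert sub_mem (hsum j) (hdiff j) using 1; module
  | inr j => convert add_mem (hsum j) (hdiff j) using 1; module

end StableSubmodule

def monomialWeight {n : ℕ} (d : Fin n ⊕ Fin n →₀ ℕ) : Fin n → ℂ :=
  fun j => d (Sum.inr j) - d (Sum.inl j)

theorem SymG_eq_restrictSupport (n : ℕ) (A : Submodule ℂ (Fin n → ℂ)) :
    SymG n A = restrictSupport ℂ {d | monomialWeight d ∈ perpC n A} := by
  rw [restrictSupport_eq_span, SymG]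
  congr 1
  ext q
  simp only [Set.mem_ofPred_eq, Set.mem_image]
  constructor
  · rintro ⟨a, b, hab, rfl⟩
    refine ⟨Finsupp.equivFunOnFinite.symm (Sum.elim b a), ?_, ?_⟩
    · convert hab using 1
      ext j
      simp [monomialWeight]
    rw [monomial_one_eq_prod_X_inl_mul_prod_X_inr]
    simp
  · rintro ⟨d, hd, rfl⟩
    exact ⟨fun j => d (Sum.inr j), fun j => d (Sum.inl j), hd,
      monomial_one_eq_prod_X_inl_mul_prod_X_inr d⟩

theorem X_inl_mul_X_inr_mem_SymG {n : ℕ} (A : Submodule ℂ (Fin n → ℂ)) (j : Fin n) :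
    X (Sum.inl j) * X (Sum.inr j) ∈ SymG n A := by
  rw [SymG_eq_restrictSupport, X, X, monomial_mul, one_mul, monomial_mem_restrictSupport]
  left
  intro v _
  simp [monomialWeight, Finsupp.single_apply]

theorem monomial_sumComm_mem_SymG {n : ℕ} {A : Submodule ℂ (Fin n → ℂ)}
    {d : Fin n ⊕ Fin n →₀ ℕ} (hd : monomial d 1 ∈ SymG n A) :
    monomial (d.equivMapDomain (Equiv.sumComm _ _)) 1 ∈ SymG n A := by
  rw [SymG_eq_restrictSupport, monomial_mem_restrictSupport] at hd ⊢
  refine .inl fun v hv => ?_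
  have h := hd.resolve_right one_ne_zero v hv
  simp only [monomialWeight, Finsupp.equivMapDomain_apply, Equiv.sumComm_symm,
    Equiv.sumComm_apply, Sum.swap_inl, Sum.swap_inr] at h ⊢
  rw [← neg_eq_zero, ← Finset.sum_neg_distrib, ← h]
  congr! 1 with j
  ring

theorem stmt11_general (n : ℕ) (A : Submodule ℂ (Fin n → ℂ))
    (I : Submodule ℂ (Qn n)) (hI : I ≤ SymG n A) (hne : I ≠ ⊥)
    (hclosed : ∀ f ∈ SymG n A, ∀ ω ∈ I, ∀ k : ℕ,
      transv n k f ω ∈ I ∧ transv n k ω f ∈ I) :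
    (1 : Qn n) ∈ I ∧ I = SymG n A := by
  have hmul : ∀ f ∈ SymG n A, ∀ p ∈ I, f * p ∈ I := fun f hf p hp =>
    transv_zero f p ▸ (hclosed f hf p hp 0).1
  have hxy : ∀ j k, ∀ p ∈ I, transv n k (X (Sum.inl j) * X (Sum.inr j)) p ∈ I :=
    fun j k p hp => (hclosed _ (X_inl_mul_X_inr_mem_SymG A j) p hp k).1
  obtain ⟨p, hpI, hp0⟩ := I.ne_bot_iff.mp hne
  obtain ⟨d, hd⟩ := support_nonempty.mpr hp0
  have hdI := monomial_one_mem_of_mem_support (fun v _ => X_mul_pderiv_mem hxy v) hpI hd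
  have hbal := hmul _ (monomial_sumComm_mem_SymG (hI hdI)) _ hdI
  rw [monomial_mul, one_mul] at hbal
  have h1 := one_mem_of_balanced_monomial_mem (fun j _ => pderiv_inl_pderiv_inr_mem hxy j)
    (fun j => by simp [add_comm]) hbal
  exact ⟨h1, le_antisymm hI fun f hf => mul_one f ▸ hmul f hf 1 h1⟩

/-- `Sym^𝔤` is simple as a `*`-algebra: any nonzero subspace `I ⊆ Sym^𝔤`
closed under transvecting (on either side) with elements of `Sym^𝔤` contains `1`, and
hence equals `Sym^𝔤`. -/
theorem stmt11 (n : ℕ) (hn : 1 ≤ n) (A : Submodule ℂ (Fin n → ℂ))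
    (I : Submodule ℂ (Qn n)) (hI : I ≤ SymG n A) (hne : I ≠ ⊥)
    (hclosed : ∀ f ∈ SymG n A, ∀ ω ∈ I, ∀ k : ℕ,
      transv n k f ω ∈ I ∧ transv n k ω f ∈ I) :
    (1 : Qn n) ∈ I ∧ I = SymG n A :=
  stmt11_general n A I hI hne hclosed
end
end
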